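/- arXiv:1711.06466 — 2 statements merged into one kernel-verified Lean document; each statement's English description precedes it below -/
import Mathlib

section
/- Let η and χ be probability measures on ℝ with finite first moments and equal means, with P_η(k) ≤ P_χ(k) for all k ∈ ℝ. Suppose x ∈ ℝ is such that P_χ(x) − P_η(x) = 0. Then for every martingale coupling π of η and χ one has π((−∞,x) × (x,∞)) + π((x,∞) × (−∞,x)) = 0; i.e. no mass crosses the point x. -/
/-!
Under a martingale coupling `(X, Y)` of `η` and `χ`, the martingale property turns the put price
`P_η(x) = E[(x - X)⁺] = E[(x - X); X < x]` into `E[(x - Y); X < x]`, while `P_χ(x) = E[(x - Y)⁺]`.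
Hence `P_χ(x) - P_η(x)` is the expectation of the nonnegative slack
`(x - Y)⁺ - 1{X < x} (x - Y)`, which is strictly positive whenever `X` and `Y` lie on opposite
sides of `x`. If the difference of put prices vanishes, the slack vanishes almost surely, so
almost surely no mass crosses `x`.
-/

open MeasureTheory Set

/-- The put price function `P_η(k) = ∫ (k-x)⁺ dη(x)`. -/
noncomputable def putPrice (η : Measure ℝ) (k : ℝ) : ℝ := ∫ x, max (k - x) 0 ∂η

/-- `π` is a martingale coupling of `μ` and `ν`. -/
def IsMartingaleCoupling (μ ν : Measure ℝ) (π : Measure (ℝ × ℝ)) : Prop :=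
  IsProbabilityMeasure π ∧ π.map Prod.fst = μ ∧ π.map Prod.snd = ν ∧
    ∀ B : Set ℝ, MeasurableSet B →
      ∫ p in B ×ˢ (Set.univ : Set ℝ), p.2 ∂π = ∫ x in B, x ∂μ

/-- The American-put payoff under coupling `π` and exercise set `B`. -/
noncomputable def amPayoff (K₁ K₂ : ℝ) (π : Measure (ℝ × ℝ)) (B : Set ℝ) : ℝ :=
  ∫ p, (B.indicator (fun x => max (K₁ - x) 0) p.1
      + Bᶜ.indicator (fun _ => max (K₂ - p.2) 0) p.1) ∂π

lemma putPrice_eq_setIntegral_Iio (η : Measure ℝ) (k : ℝ) :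
    putPrice η k = ∫ z in Iio k, (k - z) ∂η := by
  have hmax : (fun z => max (k - z) 0) = (Iio k).indicator (fun z => k - z) := by
    ext z
    by_cases hz : z < k
    · simp [indicator_of_mem (mem_Iio.2 hz), hz.le]
    · simp [not_lt.1 hz]
  rw [putPrice, hmax, integral_indicator measurableSet_Iio]

noncomputable def crossingSlack (x : ℝ) (p : ℝ × ℝ) : ℝ :=
  max (x - p.2) 0 - (Prod.fst ⁻¹' Iio x).indicator (fun q => x - q.2) p

lemma crossingSlack_nonneg (x : ℝ) : 0 ≤ crossingSlack x := by
  intro p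
  by_cases hp : p.1 < x
  · simp [crossingSlack, indicator_of_mem (show p ∈ Prod.fst ⁻¹' Iio x from hp)]
  · simp [crossingSlack, indicator_of_notMem (show p ∉ Prod.fst ⁻¹' Iio x from hp)]

lemma crossing_subset_support_crossingSlack (x : ℝ) :
    Iio x ×ˢ Ioi x ∪ Ioi x ×ˢ Iio x ⊆ Function.support (crossingSlack x) := by
  rintro p (⟨hp₁ : p.1 < x, hp₂ : x < p.2⟩ | ⟨hp₁ : x < p.1, hp₂ : p.2 < x⟩)
  · have hslack : crossingSlack x p = p.2 - x := by
      simp [crossingSlack, indicator_of_mem (show p ∈ Prod.fst ⁻¹' Iio x from hp₁),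
        (sub_neg.2 hp₂).le]
    rw [Function.mem_support, hslack]
    linarith
  · have hslack : crossingSlack x p = x - p.2 := by
      simp [crossingSlack, indicator_of_notMem (show p ∉ Prod.fst ⁻¹' Iio x from not_lt.2 hp₁.le),
        (sub_pos.2 hp₂).le]
    rw [Function.mem_support, hslack]
    linarith

namespace IsMartingaleCoupling

variable {μ ν : Measure ℝ} {π : Measure (ℝ × ℝ)}

lemma isProbabilityMeasure_left (h : IsMartingaleCoupling μ ν π) : IsProbabilityMeasure μ :=
  have := h.1
  h.2.1 ▸ Measure.isProbabilityMeasure_map measurable_fst.aemeasurable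

lemma measure_fst_preimage (h : IsMartingaleCoupling μ ν π) {B : Set ℝ} (hB : MeasurableSet B) :
    π (Prod.fst ⁻¹' B) = μ B := by
  rw [← h.2.1, Measure.map_apply measurable_fst hB]

lemma integral_comp_snd (h : IsMartingaleCoupling μ ν π) {f : ℝ → ℝ}
    (hf : AEStronglyMeasurable f ν) : ∫ p, f p.2 ∂π = ∫ y, f y ∂ν := by
  rw [← h.2.2.1] at hf ⊢
  exact (integral_map measurable_snd.aemeasurable hf).symm

lemma integrable_comp_snd (h : IsMartingaleCoupling μ ν π) {f : ℝ → ℝ} (hf : Integrable f ν) :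
    Integrable (fun p => f p.2) π := by
  rw [← h.2.2.1] at hf
  exact hf.comp_measurable measurable_snd

lemma setIntegral_fst_preimage_sub_snd (h : IsMartingaleCoupling μ ν π)
    (hμ : Integrable (fun z => z) μ) (hν : Integrable (fun z => z) ν)
    {B : Set ℝ} (hB : MeasurableSet B) (k : ℝ) :
    ∫ p in Prod.fst ⁻¹' B, (k - p.2) ∂π = ∫ z in B, (k - z) ∂μ := by
  have := h.1
  have := h.isProbabilityMeasure_left
  have hmart := h.2.2.2 B hB
  rw [prod_univ] at hmart
  rw [integral_sub (integrable_const k).integrableOn (h.integrable_comp_snd hν).integrableOn,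
    integral_sub (integrable_const k).integrableOn hμ.integrableOn, setIntegral_const,
    setIntegral_const, hmart, measureReal_def, measureReal_def, h.measure_fst_preimage hB]

lemma integrable_const_sub_snd (h : IsMartingaleCoupling μ ν π)
    (hν : Integrable (fun z => z) ν) (k : ℝ) : Integrable (fun p : ℝ × ℝ => k - p.2) π :=
  have := h.1
  (integrable_const k).sub (h.integrable_comp_snd hν)

lemma integrable_crossingSlack (h : IsMartingaleCoupling μ ν π)
    (hν : Integrable (fun z => z) ν) (x : ℝ) : Integrable (crossingSlack x) π :=
  (h.integrable_const_sub_snd hν x).pos_part.sub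
    ((h.integrable_const_sub_snd hν x).indicator (measurable_fst measurableSet_Iio))

lemma integral_crossingSlack (h : IsMartingaleCoupling μ ν π)
    (hμ : Integrable (fun z => z) μ) (hν : Integrable (fun z => z) ν) (x : ℝ) :
    ∫ p, crossingSlack x p ∂π = putPrice ν x - putPrice μ x := by
  have hput : ∫ p, max (x - p.2) 0 ∂π = putPrice ν x :=
    h.integral_comp_snd
      (by fun_prop : Continuous fun y : ℝ => max (x - y) 0).aestronglyMeasurable
  unfold crossingSlack
  rw [integral_sub (h.integrable_const_sub_snd hν x).pos_part
      ((h.integrable_const_sub_snd hν x).indicator (measurable_fst measurableSet_Iio)),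
    integral_indicator (measurable_fst measurableSet_Iio), hput,
    h.setIntegral_fst_preimage_sub_snd hμ hν measurableSet_Iio, putPrice_eq_setIntegral_Iio μ]

end IsMartingaleCoupling

theorem no_mass_crosses_general
    (η χ : Measure ℝ)
    (hηint : Integrable (fun z => z) η) (hχint : Integrable (fun z => z) χ)
    (x : ℝ) (hx : putPrice χ x - putPrice η x = 0)
    (π : Measure (ℝ × ℝ)) (hπ : IsMartingaleCoupling η χ π) :
    π (Set.Iio x ×ˢ Set.Ioi x) + π (Set.Ioi x ×ˢ Set.Iio x) = 0 := by
  have hslack : crossingSlack x =ᵐ[π] 0 :=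
    (integral_eq_zero_iff_of_nonneg (crossingSlack_nonneg x)
      (hπ.integrable_crossingSlack hχint x)).mp
      (by rw [hπ.integral_crossingSlack hηint hχint, hx])
  have hcross : π (Iio x ×ˢ Ioi x ∪ Ioi x ×ˢ Iio x) = 0 :=
    measure_mono_null (crossing_subset_support_crossingSlack x)
      ((Measure.measure_support_eq_zero_iff π).mpr hslack)
  rw [measure_mono_null subset_union_left hcross, measure_mono_null subset_union_right hcross,
    add_zero]

/-- If `D(x) = P_χ(x) - P_η(x) = 0` then no mass crosses `x` under any martingale
coupling of `η` and `χ`. -/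
theorem no_mass_crosses
    (η χ : Measure ℝ) [IsProbabilityMeasure η] [IsProbabilityMeasure χ]
    (hηint : Integrable (fun z => z) η) (hχint : Integrable (fun z => z) χ)
    (hmean : ∫ z, z ∂η = ∫ z, z ∂χ)
    (hconv : ∀ k : ℝ, putPrice η k ≤ putPrice χ k)
    (x : ℝ) (hx : putPrice χ x - putPrice η x = 0)
    (π : Measure (ℝ × ℝ)) (hπ : IsMartingaleCoupling η χ π) :
    π (Set.Iio x ×ˢ Set.Ioi x) + π (Set.Ioi x ×ˢ Set.Iio x) = 0 :=
  no_mass_crosses_general η χ hηint hχint x hx π hπ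
end

section
/- Let μ and ν be atomless probability measures on ℝ with finite first moments and let f' < x' be reals with μ((f',x')) = ν((f',x')) and ∫_{(f',x')} w dμ(w) = ∫_{(f',x')} w dν(w). Then, with D(k) = P_ν(k) − P_μ(k), one has D(x') − D(f') = (x' − f')·(ν((−∞,f')) − μ((−∞,f'))). -/
open MeasureTheory Set

/-!
For `a ≤ b` the payoff difference `(b - w)⁺ - (a - w)⁺` equals `b - a` for `w ≤ a` and `b - w` on
`(a, b)`, so `P_η(b) - P_η(a) = (b - a) η((-∞, a]) + ∫_{(a,b)} (b - w) dη`. The integral over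
`(a, b)` depends only on the mass and the mean of `η` there, and without an atom at `a` the mass of
`(-∞, a]` is that of `(-∞, a)`; subtracting the formulas for `ν` and `μ` gives the identity.
-/

lemma max_sub_zero_sub_max_sub_zero {a b : ℝ} (hab : a ≤ b) (w : ℝ) :
    max (b - w) 0 - max (a - w) 0
      = (Iic a).indicator (fun _ => b - a) w + (Ioo a b).indicator (fun w => b - w) w := by
  rcases le_or_gt w a with hwa | hwa
  · have hw : w ∉ Ioo a b := fun h => (not_lt.2 hwa) h.1
    simp only [indicator_of_mem (mem_Iic.2 hwa), indicator_of_notMem hw,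
      max_eq_left (sub_nonneg.2 hwa), max_eq_left (sub_nonneg.2 (hwa.trans hab))]
    ring
  · simp only [indicator_of_notMem (notMem_Iic.2 hwa), max_eq_right (sub_nonpos.2 hwa.le)]
    rcases lt_or_ge w b with hwb | hwb
    · simp [indicator_of_mem (mem_Ioo.2 ⟨hwa, hwb⟩), hwb.le]
    · simp [hwb]

lemma integrable_max_sub_zero {η : Measure ℝ} [IsFiniteMeasure η]
    (hint : Integrable (fun w => w) η) (k : ℝ) : Integrable (fun w => max (k - w) 0) η :=
  ((integrable_const k).sub hint).pos_part

lemma putPrice_sub_putPrice {η : Measure ℝ} [IsFiniteMeasure η]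
    (hint : Integrable (fun w => w) η) {a b : ℝ} (hab : a ≤ b) :
    putPrice η b - putPrice η a = (b - a) * η.real (Iic a) + ∫ w in Ioo a b, (b - w) ∂η := by
  rw [putPrice, putPrice, ← integral_sub (integrable_max_sub_zero hint b)
      (integrable_max_sub_zero hint a)]
  simp_rw [max_sub_zero_sub_max_sub_zero hab]
  have hIic : Integrable ((Iic a).indicator fun _ => b - a) η :=
    (integrable_const _).indicator measurableSet_Iic
  have hIoo : Integrable ((Ioo a b).indicator fun w => b - w) η :=
    ((integrable_const b).sub hint).indicator measurableSet_Ioo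
  rw [integral_add hIic hIoo,
    integral_indicator measurableSet_Iic, integral_indicator measurableSet_Ioo,
    setIntegral_const, smul_eq_mul, mul_comm]

lemma setIntegral_const_sub {η : Measure ℝ} [IsFiniteMeasure η]
    (hint : Integrable (fun w => w) η) (s : Set ℝ) (c : ℝ) :
    ∫ w in s, (c - w) ∂η = c * η.real s - ∫ w in s, w ∂η := by
  rw [integral_sub (integrable_const c) hint.integrableOn, setIntegral_const, smul_eq_mul,
    mul_comm]

lemma measureReal_Iic_of_measure_singleton {η : Measure ℝ} {a : ℝ} (ha : η {a} = 0) :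
    η.real (Iic a) = η.real (Iio a) := by
  rw [measureReal_def, measureReal_def, measure_congr (Iio_ae_eq_Iic' ha)]

/-- If `(f',x')` carries the same `μ`- and `ν`-mass and mean, then
`D(x') - D(f') = (x'-f')·(ν((-∞,f')) - μ((-∞,f')))` where `D = P_ν - P_μ`. -/
theorem D_difference_identity
    (μ ν : Measure ℝ) [IsProbabilityMeasure μ] [IsProbabilityMeasure ν]
    (hμint : Integrable (fun w => w) μ) (hνint : Integrable (fun w => w) ν)
    (hμa : ∀ w : ℝ, μ {w} = 0) (hνa : ∀ w : ℝ, ν {w} = 0)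
    (f' x' : ℝ) (hfx : f' < x')
    (hmass : μ (Set.Ioo f' x') = ν (Set.Ioo f' x'))
    (hmean : ∫ w in Set.Ioo f' x', w ∂μ = ∫ w in Set.Ioo f' x', w ∂ν) :
    (putPrice ν x' - putPrice μ x') - (putPrice ν f' - putPrice μ f')
      = (x' - f') * ((ν (Set.Iio f')).toReal - (μ (Set.Iio f')).toReal) := by
  have hν := putPrice_sub_putPrice hνint hfx.le
  have hμ := putPrice_sub_putPrice hμint hfx.le
  rw [setIntegral_const_sub hνint, measureReal_Iic_of_measure_singleton (hνa f')] at hν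
  rw [setIntegral_const_sub hμint, measureReal_Iic_of_measure_singleton (hμa f'),
    measureReal_def μ (Ioo f' x'), hmass, hmean, ← measureReal_def] at hμ
  simp only [measureReal_def] at hν hμ
  linear_combination hν - hμ
end
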